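/- Let T be the bilateral weighted shift on ℓ²(ℤ) with weight sequence (w_n)_{n∈ℤ} of positive reals. Then T is Cesàro-hypercyclic if and only if there exists a strictly increasing sequence (n_k) of positive integers such that for every integer q, lim_{k→∞} (∏_{i=1}^{n_k} w_{i+q})/n_k = ∞ and lim_{k→∞} (∏_{i=0}^{n_k−1} w_{q−i})/n_k = 0. -/

import Mathlib

open Filter Topology

/-- The space `ℓ²(ℤ)` of square-summable complex sequences indexed by `ℤ`. -/
noncomputable abbrev L2Z : Type := lp (fun _ : ℤ => ℂ) 2

/-- The canonical orthonormal basis vectors of `ℓ²(ℤ)`. -/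
noncomputable def eVec (n : ℤ) : L2Z := lp.single 2 n (1 : ℂ)

/-- `T` is the bilateral weighted shift with weight sequence `w`. -/
def IsBilateralWeightedShift (T : L2Z →L[ℂ] L2Z) (w : ℤ → ℝ) : Prop :=
  ∀ n : ℤ, T (eVec n) = (w n : ℂ) • eVec (n - 1)

/-- `T` is hypercyclic. -/
def Hypercyclic (T : L2Z →L[ℂ] L2Z) : Prop :=
  ∃ x : L2Z, Dense {y : L2Z | ∃ n : ℕ, y = (T ^ n) x}

/-- `T` is supercyclic. -/
def Supercyclic (T : L2Z →L[ℂ] L2Z) : Prop :=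
  ∃ x : L2Z, Dense {y : L2Z | ∃ (c : ℂ) (n : ℕ), y = c • (T ^ n) x}

/-- `T` is Cesàro-hypercyclic. -/
def CesaroHypercyclic (T : L2Z →L[ℂ] L2Z) : Prop :=
  ∃ x : L2Z, Dense {y : L2Z | ∃ n : ℕ, 1 ≤ n ∧ y = ((n : ℂ))⁻¹ • (T ^ n) x}

/-!
Write `Aₙ = n⁻¹ Tⁿ`. On the basis, `Aₙ e_q = (∏_{i=0}^{n-1} w_{q-i} / n) e_{q-n}`, and `e_q` is
the image under `Aₙ` of `(n / ∏_{i=1}^{n} w_{q+i}) e_{q+n}`. So the two limits along `(n_k)` are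
exactly the hypercyclicity criterion on finitely supported vectors, and Birkhoff's transitivity
argument (Baire category) yields a vector whose means `A_{n_k} x` are dense.

Conversely, if `x` is Cesàro-hypercyclic, then so is every `v = A_m x` (`A_m` has dense range and
commutes with all `Aₙ`). Taking `v` and infinitely many `Aₙ v` close to `∑_{|p| ≤ k} e_p`, the
coordinates `q`, `q + n` of `v` and `q`, `q - n` of `Aₙ v` bound the two weight products for
`|q| ≤ k`; a diagonal extraction over `k` gives `(n_k)`.
-/

open Set

theorem exists_denseRange_apply_of_transitive {ι X Y : Type*} [TopologicalSpace X] [BaireSpace X]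
    [Nonempty X] [TopologicalSpace Y] [SecondCountableTopology Y] {f : ι → X → Y}
    (hf : ∀ i, Continuous (f i))
    (htrans : ∀ (U : Set X) (V : Set Y), IsOpen U → U.Nonempty → IsOpen V → V.Nonempty →
      ∃ i, ∃ x ∈ U, f i x ∈ V) :
    ∃ x, DenseRange fun i => f i x := by
  obtain ⟨B, hBc, -, hB⟩ := TopologicalSpace.exists_countable_basis Y
  have hopen : ∀ V ∈ {V ∈ B | V.Nonempty}, IsOpen (⋃ i, f i ⁻¹' V) := fun V hV =>
    isOpen_iUnion fun i => (hB.isOpen hV.1).preimage (hf i)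
  have hdense : ∀ V ∈ {V ∈ B | V.Nonempty}, Dense (⋃ i, f i ⁻¹' V) := fun V hV =>
    dense_iff_inter_open.2 fun U hU hne => by
      obtain ⟨i, x, hxU, hxV⟩ := htrans U V hU hne (hB.isOpen hV.1) hV.2
      exact ⟨x, hxU, mem_iUnion.2 ⟨i, hxV⟩⟩
  obtain ⟨x, hx⟩ := (dense_biInter_of_isOpen hopen (hBc.mono (sep_subset _ _)) hdense).nonempty
  refine ⟨x, hB.dense_iff.2 fun V hV hne => ?_⟩
  obtain ⟨i, hi⟩ := mem_iUnion.1 (mem_iInter₂.1 hx V ⟨hV, hne⟩)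
  exact ⟨f i x, hi, i, rfl⟩

theorem DenseRange.frequently_mem {X : Type*} [TopologicalSpace X] [T1Space X]
    [∀ x : X, NeBot (𝓝[≠] x)] {u : ℕ → X} (hu : DenseRange u) {U : Set X} (hU : IsOpen U)
    (hne : U.Nonempty) : ∃ᶠ n in atTop, u n ∈ U := by
  rw [Nat.frequently_atTop_iff_infinite]
  intro hfin
  obtain ⟨_, hxU, ⟨n, rfl⟩, hn⟩ := (hu.sdiff_finite (hfin.image u)).inter_open_nonempty U hU hne
  exact hn ⟨n, hxU, rfl⟩

theorem DenseRange.apply_map_of_commute {ι X : Type*} [TopologicalSpace X] {g : ι → X → X}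
    {f : X → X} {x : X} (hx : DenseRange fun i => g i x) (hf : Continuous f) (hf' : DenseRange f)
    (hcomm : ∀ i y, g i (f y) = f (g i y)) : DenseRange fun i => g i (f x) := by
  simpa only [Function.comp_def, hcomm] using hf'.comp hx hf

theorem DenseRange.iterate {X : Type*} [TopologicalSpace X] {f : X → X} (hf : DenseRange f)
    (hf' : Continuous f) (n : ℕ) : DenseRange f^[n] := by
  induction n with
  | zero => exact denseRange_id
  | succ n ih => rw [Function.iterate_succ']; exact hf.comp ih hf'

section Criterion

variable {R E : Type*} [Semiring R] [AddCommMonoid E] [TopologicalSpace E] [ContinuousAdd E]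
  [Module R E] [ContinuousConstSMul R E]

theorem exists_apply_mem_of_hypercyclicityCriterion {A : ℕ → E →ₗ[R] E} {s : Set E}
    (hs : Dense (Submodule.span R s : Set E))
    (hzero : ∀ z ∈ s, Tendsto (fun k => A k z) atTop (𝓝 0))
    (hinv : ∀ y ∈ s, ∃ u : ℕ → E, Tendsto u atTop (𝓝 0) ∧ ∀ k, A k (u k) = y)
    {U V : Set E} (hU : IsOpen U) (hU' : U.Nonempty) (hV : IsOpen V) (hV' : V.Nonempty) :
    ∃ k, ∃ x ∈ U, A k x ∈ V := by
  have hzero' : ∀ z ∈ Submodule.span R s, Tendsto (fun k => A k z) atTop (𝓝 0) := by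
    intro z hz
    induction hz using Submodule.span_induction with
    | mem z hz => exact hzero z hz
    | zero => simpa using tendsto_const_nhds
    | add z z' _ _ h h' => simpa using h.add h'
    | smul c z _ h => simpa using h.const_smul c
  have hinv' : ∀ y ∈ Submodule.span R s,
      ∃ u : ℕ → E, Tendsto u atTop (𝓝 0) ∧ ∀ k, A k (u k) = y := by
    intro y hy
    induction hy using Submodule.span_induction with
    | mem y hy => exact hinv y hy
    | zero => exact ⟨0, tendsto_const_nhds, by simp⟩
    | add y y' _ _ h h' =>
      obtain ⟨u, hu, hAu⟩ := h
      obtain ⟨u', hu', hAu'⟩ := h'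
      exact ⟨fun k => u k + u' k, by simpa using hu.add hu', by simp [hAu, hAu']⟩
    | smul c y _ h =>
      obtain ⟨u, hu, hAu⟩ := h
      exact ⟨fun k => c • u k, by simpa using hu.const_smul c, by simp [hAu]⟩
  obtain ⟨z, hz, hzU⟩ := hs.exists_mem_open hU hU'
  obtain ⟨y, hy, hyV⟩ := hs.exists_mem_open hV hV'
  obtain ⟨u, hu, hAu⟩ := hinv' y hy
  have hx : Tendsto (fun k => z + u k) atTop (𝓝 z) := by
    simpa using tendsto_const_nhds.add hu
  have hAx : Tendsto (fun k => A k (z + u k)) atTop (𝓝 y) := by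
    simpa [hAu] using (hzero' z hz).add_const y
  obtain ⟨k, hkU, hkV⟩ := ((hx.eventually (hU.mem_nhds hzU)).and
    (hAx.eventually (hV.mem_nhds hyV))).exists
  exact ⟨k, _, hkU, hkV⟩

end Criterion

section CesaroMean

variable {𝕜 E : Type*} [NontriviallyNormedField 𝕜] [NormedAddCommGroup E] [NormedSpace 𝕜 E]

def cesaroMean (T : E →L[𝕜] E) (n : ℕ) : E →L[𝕜] E := (n : 𝕜)⁻¹ • T ^ n

variable {T : E →L[𝕜] E}

theorem cesaroMean_apply (n : ℕ) (x : E) : cesaroMean T n x = (n : 𝕜)⁻¹ • (T ^ n) x := rfl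

theorem cesaroMean_apply_comm (m n : ℕ) (x : E) :
    cesaroMean T m (cesaroMean T n x) = cesaroMean T n (cesaroMean T m x) :=
  have h : Commute (cesaroMean T m) (cesaroMean T n) :=
    ((Commute.pow_pow_self T m n).smul_left _).smul_right _
  DFunLike.congr_fun h.eq x

theorem denseRange_cesaroMean [CharZero 𝕜] (hT : DenseRange T) {n : ℕ} (hn : n ≠ 0) :
    DenseRange (cesaroMean T n) := by
  have hpow : DenseRange (T ^ n) := by
    rw [FunLike.coe_pow_eq_iterate]; exact hT.iterate T.continuous n
  have hsmul : Function.Surjective fun x : E => (n : 𝕜)⁻¹ • x := fun y =>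
    ⟨(n : 𝕜) • y, by simp [smul_smul, hn]⟩
  have : ⇑(cesaroMean T n) = (T ^ n) ∘ fun x : E => (n : 𝕜)⁻¹ • x :=
    funext fun x => (map_smul (T ^ n) _ x).symm
  rw [this]
  exact hpow.comp hsmul.denseRange (T ^ n).continuous

theorem exists_mem_frequently_cesaroMean_mem [CharZero 𝕜] [Nontrivial E] (hT : DenseRange T)
    {x₀ : E} (hx₀ : Dense {y | ∃ n : ℕ, 1 ≤ n ∧ y = cesaroMean T n x₀}) {U : Set E}
    (hU : IsOpen U) (hne : U.Nonempty) : ∃ v ∈ U, ∃ᶠ n in atTop, cesaroMean T n v ∈ U := by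
  have := Module.punctured_nhds_neBot 𝕜 E
  obtain ⟨_, ⟨m, hm, rfl⟩, hmU⟩ := hx₀.exists_mem_open hU hne
  have hrange : DenseRange fun n => cesaroMean T n x₀ :=
    hx₀.mono (by rintro _ ⟨n, -, rfl⟩; exact ⟨n, rfl⟩)
  refine ⟨_, hmU, DenseRange.frequently_mem ?_ hU hne⟩
  exact hrange.apply_map_of_commute (cesaroMean T m).continuous
    (denseRange_cesaroMean hT (by omega)) fun n y => cesaroMean_apply_comm n m y

end CesaroMean

section L2Z

theorem eVec_apply (p j : ℤ) : eVec p j = if j = p then 1 else 0 := by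
  simp [eVec, Pi.single_apply]

theorem norm_eVec (p : ℤ) : ‖eVec p‖ = 1 := by
  simp [eVec, lp.norm_single]

instance : Nontrivial L2Z :=
  nontrivial_of_ne (eVec 0) 0 (norm_ne_zero_iff.1 (by rw [norm_eVec]; exact one_ne_zero))

theorem dense_span_eVec : Dense (Submodule.span ℂ (range eVec) : Set L2Z) := by
  intro x
  refine mem_closure_of_tendsto (lp.hasSum_single ENNReal.ofNat_ne_top x)
    (Eventually.of_forall fun s => Submodule.sum_mem _ fun p _ => ?_)
  have : lp.single 2 p (x p) = x p • eVec p := by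
    simpa [eVec] using lp.single_smul (E := fun _ : ℤ => ℂ) 2 p (x p) (1 : ℂ)
  rw [this]
  exact Submodule.smul_mem _ _ (Submodule.subset_span ⟨p, rfl⟩)

instance : TopologicalSpace.SeparableSpace L2Z :=
  TopologicalSpace.isSeparable_univ_iff.1 <| by
    simpa [dense_span_eVec.closure_eq] using
      ((countable_range eVec).isSeparable.span (R := ℂ)).closure

theorem sum_eVec_apply (s : Finset ℤ) (j : ℤ) :
    (∑ p ∈ s, eVec p) j = if j ∈ s then 1 else 0 := by
  rw [lp.coeFn_sum, Finset.sum_apply]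
  simp [eVec_apply]

theorem norm_apply_sub_le (x y : L2Z) (j : ℤ) : ‖x j - y j‖ ≤ ‖x - y‖ :=
  lp.norm_apply_le_norm two_ne_zero (x - y) j

variable {x : L2Z} {s : Finset ℤ} {ε : ℝ}

theorem one_sub_lt_norm_apply (h : dist x (∑ p ∈ s, eVec p) < ε) {j : ℤ} (hj : j ∈ s) :
    1 - ε < ‖x j‖ := by
  have := (norm_apply_sub_le x _ j).trans_lt (dist_eq_norm x _ ▸ h)
  rw [sum_eVec_apply, if_pos hj] at this
  linarith [norm_sub_norm_le (1 : ℂ) (x j), norm_sub_rev (x j) 1, norm_one (α := ℂ)]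

theorem norm_apply_lt (h : dist x (∑ p ∈ s, eVec p) < ε) {j : ℤ} (hj : j ∉ s) : ‖x j‖ < ε := by
  have := (norm_apply_sub_le x _ j).trans_lt (dist_eq_norm x _ ▸ h)
  rwa [sum_eVec_apply, if_neg hj, sub_zero] at this

end L2Z

section WeightProd

noncomputable def fwdProd (w : ℤ → ℝ) (n : ℕ) (q : ℤ) : ℝ := ∏ i ∈ Finset.Icc (1 : ℤ) n, w (i + q)

noncomputable def bwdProd (w : ℤ → ℝ) (n : ℕ) (q : ℤ) : ℝ :=
  ∏ i ∈ Finset.Icc (0 : ℤ) (n - 1), w (q - i)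

variable {w : ℤ → ℝ}

theorem fwdProd_pos (hw : ∀ n, 0 < w n) (n : ℕ) (q : ℤ) : 0 < fwdProd w n q :=
  Finset.prod_pos fun _ _ => hw _

theorem fwdProd_zero (q : ℤ) : fwdProd w 0 q = 1 := by simp [fwdProd]

theorem fwdProd_succ (n : ℕ) (q : ℤ) : fwdProd w (n + 1) q = fwdProd w n q * w (n + 1 + q) := by
  have : Finset.Icc (1 : ℤ) (n + 1) = insert ((n : ℤ) + 1) (Finset.Icc (1 : ℤ) n) := by
    ext i; simp only [Finset.mem_Icc, Finset.mem_insert]; omega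
  rw [fwdProd, fwdProd, Nat.cast_succ, this, Finset.prod_insert (by simp), mul_comm]

theorem bwdProd_eq_fwdProd (n : ℕ) (q : ℤ) : bwdProd w n q = fwdProd w n (q - n) :=
  Finset.prod_nbij' (fun i => n - i) (fun i => n - i) (by intro i hi; simp at hi ⊢; omega)
    (by intro i hi; simp at hi ⊢; omega) (by intro i _; ring) (by intro i _; ring)
    (by intro i _; congr 1; ring)

theorem bwdProd_pos (hw : ∀ n, 0 < w n) (n : ℕ) (q : ℤ) : 0 < bwdProd w n q :=
  bwdProd_eq_fwdProd n q ▸ fwdProd_pos hw n (q - n)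

end WeightProd

namespace IsBilateralWeightedShift

variable {w : ℤ → ℝ} {T : L2Z →L[ℂ] L2Z}

theorem apply_apply (hT : IsBilateralWeightedShift T w) (x : L2Z) (j : ℤ) :
    T x j = w (j + 1) * x (j + 1) := by
  have key : (lp.evalCLM ℂ _ 2 j).comp T = (w (j + 1) : ℂ) • lp.evalCLM ℂ _ 2 (j + 1) := by
    refine ContinuousLinearMap.ext_on dense_span_eVec ?_
    rintro _ ⟨n, rfl⟩
    simp only [ContinuousLinearMap.comp_apply, smul_apply, hT n]
    show (w n : ℂ) * eVec (n - 1) j = (w (j + 1) : ℂ) * eVec n (j + 1)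
    simp only [eVec_apply]
    split_ifs <;> first | omega | simp_all
  exact DFunLike.congr_fun key x

theorem pow_apply_apply (hT : IsBilateralWeightedShift T w) (n : ℕ) (x : L2Z) (j : ℤ) :
    (T ^ n) x j = fwdProd w n j * x (j + n) := by
  induction n generalizing x with
  | zero => simp [fwdProd_zero]
  | succ n ih =>
    rw [pow_succ, mul_apply_eq_comp, ih, hT.apply_apply, fwdProd_succ]
    push_cast
    ring_nf

theorem pow_eVec_add (hT : IsBilateralWeightedShift T w) (n : ℕ) (q : ℤ) :
    (T ^ n) (eVec (q + n)) = (fwdProd w n q : ℂ) • eVec q := by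
  induction n with
  | zero => simp [fwdProd_zero]
  | succ n ih =>
    have hTe : T (eVec (q + (n + 1 : ℕ))) = (w (n + 1 + q) : ℂ) • eVec (q + n) := by
      rw [hT]; push_cast; ring_nf
    rw [pow_succ, mul_apply_eq_comp, hTe, map_smul, ih, smul_smul, fwdProd_succ]
    push_cast
    ring_nf

theorem denseRange (hw : ∀ n, 0 < w n) (hT : IsBilateralWeightedShift T w) : DenseRange T := by
  refine dense_span_eVec.mono (Submodule.span_le.2 ?_ : _ ≤ LinearMap.range (T : L2Z →ₗ[ℂ] L2Z))
  rintro _ ⟨q, rfl⟩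
  refine ⟨(w (q + 1) : ℂ)⁻¹ • eVec (q + 1), ?_⟩
  have : (w (q + 1) : ℂ) ≠ 0 := Complex.ofReal_ne_zero.2 (hw _).ne'
  change T _ = _
  rw [map_smul, hT (q + 1), add_sub_cancel_right, smul_smul, inv_mul_cancel₀ this, one_smul]

theorem norm_cesaroMean_apply (hw : ∀ n, 0 < w n) (hT : IsBilateralWeightedShift T w)
    (n : ℕ) (x : L2Z) (j : ℤ) :
    ‖cesaroMean T n x j‖ = fwdProd w n j / n * ‖x (j + n)‖ := by
  rw [cesaroMean_apply, lp.coeFn_smul, Pi.smul_apply, hT.pow_apply_apply, smul_eq_mul, norm_mul,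
    norm_mul, norm_inv, Complex.norm_natCast, Complex.norm_real, Real.norm_of_nonneg
      (fwdProd_pos hw n j).le]
  ring

theorem cesaroMean_eVec (hT : IsBilateralWeightedShift T w) (n : ℕ) (q : ℤ) :
    cesaroMean T n (eVec q) = ((bwdProd w n q / n : ℝ) : ℂ) • eVec (q - n) := by
  have := hT.pow_eVec_add n (q - n)
  rw [sub_add_cancel] at this
  rw [cesaroMean_apply, this, smul_smul, bwdProd_eq_fwdProd]
  push_cast
  ring_nf

theorem cesaroMean_smul_eVec_add (hw : ∀ n, 0 < w n) (hT : IsBilateralWeightedShift T w)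
    {n : ℕ} (hn : n ≠ 0) (q : ℤ) :
    cesaroMean T n (((n / fwdProd w n q : ℝ) : ℂ) • eVec (q + n)) = eVec q := by
  have : (fwdProd w n q : ℂ) ≠ 0 := Complex.ofReal_ne_zero.2 (fwdProd_pos hw n q).ne'
  rw [cesaroMean_apply, map_smul, hT.pow_eVec_add, smul_smul, smul_smul]
  push_cast
  field_simp
  simp

theorem cesaroHypercyclic_of_tendsto (hw : ∀ n, 0 < w n) (hT : IsBilateralWeightedShift T w)
    {nk : ℕ → ℕ} (hpos : ∀ k, 0 < nk k)
    (hfwd : ∀ q, Tendsto (fun k => fwdProd w (nk k) q / nk k) atTop atTop)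
    (hbwd : ∀ q, Tendsto (fun k => bwdProd w (nk k) q / nk k) atTop (𝓝 0)) :
    CesaroHypercyclic T := by
  have hzero : ∀ z ∈ range eVec, Tendsto (fun k => cesaroMean T (nk k) z) atTop (𝓝 0) := by
    rintro _ ⟨q, rfl⟩
    rw [tendsto_zero_iff_norm_tendsto_zero]
    refine (hbwd q).congr fun k => ?_
    rw [hT.cesaroMean_eVec, norm_smul, norm_eVec, mul_one, Complex.norm_real,
      Real.norm_of_nonneg (by positivity [bwdProd_pos hw (nk k) q])]
  have hinv : ∀ y ∈ range eVec, ∃ u : ℕ → L2Z, Tendsto u atTop (𝓝 0) ∧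
      ∀ k, cesaroMean T (nk k) (u k) = y := by
    rintro _ ⟨q, rfl⟩
    refine ⟨fun k => ((nk k / fwdProd w (nk k) q : ℝ) : ℂ) • eVec (q + nk k), ?_,
      fun k => hT.cesaroMean_smul_eVec_add hw (hpos k).ne' q⟩
    rw [tendsto_zero_iff_norm_tendsto_zero]
    refine (hfwd q).inv_tendsto_atTop.congr fun k => ?_
    rw [norm_smul, norm_eVec, mul_one, Complex.norm_real,
      Real.norm_of_nonneg (by positivity [fwdProd_pos hw (nk k) q]), Pi.inv_apply, inv_div]
  obtain ⟨x, hx⟩ := exists_denseRange_apply_of_transitive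
    (fun k => (cesaroMean T (nk k)).continuous) fun U V =>
      exists_apply_mem_of_hypercyclicityCriterion
        (A := fun k => (cesaroMean T (nk k) : L2Z →ₗ[ℂ] L2Z)) dense_span_eVec hzero hinv
  exact ⟨x, hx.mono (by rintro _ ⟨k, rfl⟩; exact ⟨nk k, hpos k, rfl⟩)⟩

theorem frequently_weightProd_bounds (hw : ∀ n, 0 < w n) (hT : IsBilateralWeightedShift T w)
    {x₀ : L2Z} (hx₀ : Dense {y | ∃ n : ℕ, 1 ≤ n ∧ y = cesaroMean T n x₀}) (k : ℕ) :
    ∃ᶠ n in atTop, ∀ q ∈ Finset.Icc (-(k : ℤ)) k,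
      (k : ℝ) + 1 ≤ fwdProd w n q / n ∧ bwdProd w n q / n ≤ 1 / ((k : ℝ) + 1) := by
  -- chosen so that `(1 - ε) / ε = k + 1` and `ε / (1 - ε) = 1 / (k + 1)`
  set ε : ℝ := 1 / (k + 2) with hε_def
  have hε : 0 < ε := by positivity
  have hε1 : 0 < 1 - ε := by rw [hε_def, sub_pos, div_lt_one (by positivity)]; linarith
  obtain ⟨v, hv, hfreq⟩ := exists_mem_frequently_cesaroMean_mem (hT.denseRange hw) hx₀
    Metric.isOpen_ball ((Metric.nonempty_ball (x := ∑ p ∈ Finset.Icc (-(k : ℤ)) k, eVec p)).2 hε)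
  refine (hfreq.and_eventually (eventually_gt_atTop (2 * k))).mono fun n ⟨hAv, hn⟩ q hq => ?_
  have hq' := Finset.mem_Icc.1 hq
  have hout_add : q + n ∉ Finset.Icc (-(k : ℤ)) k := by rw [Finset.mem_Icc]; omega
  have hout_sub : q - n ∉ Finset.Icc (-(k : ℤ)) k := by rw [Finset.mem_Icc]; omega
  have hfwd : 1 - ε < fwdProd w n q / n * ε :=
    calc 1 - ε < ‖cesaroMean T n v q‖ := one_sub_lt_norm_apply hAv hq
      _ = fwdProd w n q / n * ‖v (q + n)‖ := hT.norm_cesaroMean_apply hw n v q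
      _ ≤ fwdProd w n q / n * ε := by
        gcongr
        · positivity [fwdProd_pos hw n q]
        · exact (norm_apply_lt hv hout_add).le
  have hbwd : bwdProd w n q / n * (1 - ε) < ε :=
    calc bwdProd w n q / n * (1 - ε) ≤ bwdProd w n q / n * ‖v q‖ := by
          gcongr
          · positivity [bwdProd_pos hw n q]
          · exact (one_sub_lt_norm_apply hv hq).le
      _ = ‖cesaroMean T n v (q - n)‖ := by
          rw [hT.norm_cesaroMean_apply hw, sub_add_cancel, bwdProd_eq_fwdProd]
      _ < ε := norm_apply_lt hAv hout_sub
  constructor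
  · have : (k : ℝ) + 1 = (1 - ε) / ε := by rw [hε_def]; field_simp; ring
    rw [this, div_le_iff₀ hε]
    exact hfwd.le
  · have : 1 / ((k : ℝ) + 1) = ε / (1 - ε) := by
      rw [hε_def, one_sub_div (by positivity), div_div_div_cancel_right₀ (by positivity)]
      ring
    rw [this, le_div_iff₀ hε1]
    exact hbwd.le

theorem exists_strictMono_tendsto_of_cesaroHypercyclic (hw : ∀ n, 0 < w n)
    (hT : IsBilateralWeightedShift T w) (h : CesaroHypercyclic T) :
    ∃ nk : ℕ → ℕ, StrictMono nk ∧ (∀ k, 0 < nk k) ∧ ∀ q : ℤ,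
      Tendsto (fun k => fwdProd w (nk k) q / nk k) atTop atTop ∧
      Tendsto (fun k => bwdProd w (nk k) q / nk k) atTop (𝓝 0) := by
  obtain ⟨x₀, hx₀⟩ := h
  obtain ⟨nk, hmono, hnk⟩ := extraction_forall_of_frequently fun k =>
    (hT.frequently_weightProd_bounds hw hx₀ k).and_eventually (eventually_gt_atTop 0)
  refine ⟨nk, hmono, fun k => (hnk k).2, fun q => ?_⟩
  have hbound : ∀ᶠ k : ℕ in atTop, (k : ℝ) + 1 ≤ fwdProd w (nk k) q / nk k ∧
      bwdProd w (nk k) q / nk k ≤ 1 / ((k : ℝ) + 1) := by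
    filter_upwards [eventually_ge_atTop q.natAbs] with k hk
    exact (hnk k).1 q (Finset.mem_Icc.2 ⟨by omega, by omega⟩)
  refine ⟨tendsto_atTop_mono' _ (hbound.mono fun k hk => hk.1)
    (tendsto_atTop_add_const_right _ 1 tendsto_natCast_atTop_atTop), ?_⟩
  exact squeeze_zero' (Eventually.of_forall fun k => by positivity [bwdProd_pos hw (nk k) q])
    (hbound.mono fun k hk => hk.2) tendsto_one_div_add_atTop_nhds_zero_nat

end IsBilateralWeightedShift

theorem bilateral_shift_cesaro_hypercyclic_iff_general
    (w : ℤ → ℝ) (hw_pos : ∀ n : ℤ, 0 < w n)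
    (T : L2Z →L[ℂ] L2Z) (hT : IsBilateralWeightedShift T w) :
    CesaroHypercyclic T ↔
      ∃ nk : ℕ → ℕ, StrictMono nk ∧ (∀ k, 0 < nk k) ∧
        ∀ q : ℤ,
          Tendsto (fun k => (∏ i ∈ Finset.Icc (1 : ℤ) (nk k : ℤ), w (i + q)) / (nk k : ℝ))
            atTop atTop ∧
          Tendsto (fun k => (∏ i ∈ Finset.Icc (0 : ℤ) ((nk k : ℤ) - 1), w (q - i)) / (nk k : ℝ))
            atTop (𝓝 0) := by
  refine ⟨hT.exists_strictMono_tendsto_of_cesaroHypercyclic hw_pos, ?_⟩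
  rintro ⟨nk, -, hpos, hcond⟩
  exact hT.cesaroHypercyclic_of_tendsto hw_pos hpos (fun q => (hcond q).1) fun q => (hcond q).2

theorem bilateral_shift_cesaro_hypercyclic_iff
    (w : ℤ → ℝ) (hw_pos : ∀ n : ℤ, 0 < w n) (hw_bdd : ∃ C : ℝ, ∀ n : ℤ, w n ≤ C)
    (T : L2Z →L[ℂ] L2Z) (hT : IsBilateralWeightedShift T w) :
    CesaroHypercyclic T ↔
      ∃ nk : ℕ → ℕ, StrictMono nk ∧ (∀ k, 0 < nk k) ∧
        ∀ q : ℤ,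
          Tendsto (fun k => (∏ i ∈ Finset.Icc (1 : ℤ) (nk k : ℤ), w (i + q)) / (nk k : ℝ))
            atTop atTop ∧
          Tendsto (fun k => (∏ i ∈ Finset.Icc (0 : ℤ) ((nk k : ℤ) - 1), w (q - i)) / (nk k : ℝ))
            atTop (𝓝 0) :=
  bilateral_shift_cesaro_hypercyclic_iff_general w hw_pos T hT
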